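/- Assume that r and s have no common nonzero root, i.e. there is no (u,v) ∈ ℂ² with (u,v) ≠ (0,0), r(u,v) = 0 and s(u,v) = 0. Then the projective transformation induced by (x₀,x₁,x₂,x₃) ↦ (x₀,x₁,ξx₂,ξ²x₃) acts freely on C₄: for every nonzero vector (x₀,x₁,x₂,x₃) ∈ C₄ and every λ ∈ ℂ, one has (x₀,x₁,ξx₂,ξ²x₃) ≠ (λx₀, λx₁, λx₂, λx₃). -/
import Mathlib


open MvPolynomial

lemma aux_eval_zero {n : ℕ} (hn : n ≠ 0) (r : MvPolynomial (Fin 2) ℂ)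
    (hr : r.IsHomogeneous n) : eval ![(0:ℂ), 0] r = 0 := by
  have h0 : ![(0:ℂ),0] = (0 : Fin 2 → ℂ) := by ext i; fin_cases i <;> simp
  rw [h0, eval_zero]
  exact hr.coeff_eq_zero (by simpa using Ne.symm hn)

/-- Let `ξ ∈ ℂ` be a primitive third root of unity and `r, s` homogeneous polynomials in
two variables of degrees `2` and `3` with no common nonzero root. Then the projective
transformation induced by `(x₀,x₁,x₂,x₃) ↦ (x₀,x₁,ξx₂,ξ²x₃)` acts freely on the curve
`C₄ = {x₂x₃ + r(x₀,x₁) = 0, x₂³ + x₃³ + s(x₀,x₁) = 0}`: for every nonzero vector of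
`C₄` and every `λ ∈ ℂ`, `(x₀,x₁,ξx₂,ξ²x₃) ≠ (λx₀,λx₁,λx₂,λx₃)`. -/
theorem statement11 (ξ : ℂ) (hξ3 : ξ ^ 3 = 1) (hξ1 : ξ ≠ 1)
    (r s : MvPolynomial (Fin 2) ℂ) (hr : r.IsHomogeneous 2) (hs : s.IsHomogeneous 3)
    (hnocommonroot : ¬ ∃ u v : ℂ, (u, v) ≠ (0, 0) ∧
      eval ![u, v] r = 0 ∧ eval ![u, v] s = 0)
    (x₀ x₁ x₂ x₃ : ℂ)
    (hne : (x₀, x₁, x₂, x₃) ≠ (0, 0, 0, 0))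
    (h1 : x₂ * x₃ + eval ![x₀, x₁] r = 0)
    (h2 : x₂ ^ 3 + x₃ ^ 3 + eval ![x₀, x₁] s = 0)
    (lam : ℂ) :
    (x₀, x₁, ξ * x₂, ξ ^ 2 * x₃) ≠ (lam * x₀, lam * x₁, lam * x₂, lam * x₃) := by
  intro heq
  simp only [Prod.mk.injEq] at heq
  obtain ⟨e0, e1, e2, e3⟩ := heq
  have hξ2 : ξ ^ 2 ≠ 1 := by
    intro h
    apply hξ1
    calc ξ = ξ ^ 2 * ξ := by rw [h, one_mul]
    _ = 1 := by rw [← pow_succ, hξ3]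
  by_cases h01 : x₀ = 0 ∧ x₁ = 0
  · obtain ⟨hx0, hx1⟩ := h01
    subst hx0; subst hx1
    rw [aux_eval_zero two_ne_zero r hr, add_zero] at h1
    rw [aux_eval_zero three_ne_zero s hs, add_zero] at h2
    rcases mul_eq_zero.mp h1 with h | h
    · have hx3 : x₃ = 0 := by rw [h] at h2; simpa using h2
      exact hne (by rw [h, hx3])
    · have hx2 : x₂ = 0 := by rw [h] at h2; simpa using h2
      exact hne (by rw [h, hx2])
  · have hlam : lam = 1 := by
      rcases not_and_or.mp h01 with h | h
      · have h' : (lam - 1) * x₀ = 0 := by linear_combination -e0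
        rcases mul_eq_zero.mp h' with h'' | h''
        · exact sub_eq_zero.mp h''
        · exact absurd h'' h
      · have h' : (lam - 1) * x₁ = 0 := by linear_combination -e1
        rcases mul_eq_zero.mp h' with h'' | h''
        · exact sub_eq_zero.mp h''
        · exact absurd h'' h
    subst hlam
    rw [one_mul] at e2 e3
    have hx2 : x₂ = 0 := by
      by_contra h
      exact hξ1 (mul_right_cancel₀ h (by rw [e2, one_mul]))
    have hx3 : x₃ = 0 := by
      by_contra h
      exact hξ2 (mul_right_cancel₀ h (by rw [e3, one_mul]))
    rw [hx2, hx3] at h1 h2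
    refine hnocommonroot ⟨x₀, x₁, ?_, by linear_combination h1, by linear_combination h2⟩
    simp only [ne_eq, Prod.mk.injEq, not_and]
    intro hx0
    rcases not_and_or.mp h01 with h | h
    · exact absurd hx0 h
    · exact h
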